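/- arXiv:1910.10944 — 2 statements merged into one kernel-verified Lean document; each statement's English description precedes it below -/
import Mathlib

section
/- There exist a finite instance set X, a finite hypothesis class H of functions X → Bool, and an initial hypothesis h0 ∈ H such that Σ_const-TD_{X,H,h0} = 3, Σ_global-TD_{X,H,h0} = 2, and Σ_gvs-TD_{X,H,h0} = 1 (equivalently, TD(H) = 3, RTD(H) = 2, and NCTD(H) = 1). -/
open scoped Classical

/-- A preference function `σ(h'; H', h)`: `h'` is a candidate hypothesis, `H'` the current
version space, `h` the learner's current hypothesis. -/
abbrev Pref (X : Type) : Type := (X → Bool) → Finset (X → Bool) → (X → Bool) → ℝ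

variable {X : Type}

/-- `h` is consistent with the labeled examples in `S`. -/
def ConsistentWith (h : X → Bool) (S : Finset (X × Bool)) : Prop := ∀ z ∈ S, h z.1 = z.2

/-- Version space of `H'` induced by the labeled examples `S`. -/
noncomputable def verSpace (H' : Finset (X → Bool)) (S : Finset (X × Bool)) :
    Finset (X → Bool) :=
  H'.filter fun h => ∀ z ∈ S, h z.1 = z.2

/-- The set of hypotheses in `H'` most preferred by `σ` given current hypothesis `h`. -/
noncomputable def argminSet (σ : Pref X) (H' : Finset (X → Bool)) (h : X → Bool) :
    Finset (X → Bool) :=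
  H'.filter fun h' => ∀ h'' ∈ H', σ h' H' h ≤ σ h'' H' h

/-- `C_σ(H', h, z)`: the candidate hypotheses most preferred by the learner after
receiving the labeled example `z`. -/
noncomputable def Cand (σ : Pref X) (H' : Finset (X → Bool)) (h : X → Bool) (z : X × Bool) :
    Finset (X → Bool) :=
  argminSet σ (verSpace H' {z}) h

/-- `Dle σ n H' h h*` means the worst-case teaching cost `D_σ(H', h, h*) ≤ n`. -/
def Dle (σ : Pref X) : ℕ → Finset (X → Bool) → (X → Bool) → (X → Bool) → Prop
  | 0, _, _, _ => False
  | n + 1, H', h, hstar =>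
      (∃ z : X × Bool, hstar z.1 = z.2 ∧ Cand σ H' h z = {hstar}) ∨
      (∃ z : X × Bool, hstar z.1 = z.2 ∧
        ∀ h'' ∈ Cand σ H' h z, Dle σ n (verSpace H' {z}) h'' hstar)

/-- The worst-case teaching cost `D_σ(H', h, h*)` (∞ when teaching is impossible). -/
noncomputable def Dval (σ : Pref X) (H' : Finset (X → Bool)) (h hstar : X → Bool) : ℕ∞ :=
  sInf {n : ℕ∞ | ∃ m : ℕ, n = (m : ℕ∞) ∧ Dle σ m H' h hstar}

/-- Teaching dimension `TD_{X,H,h0}(σ) = max_{h* ∈ H} D_σ(H, h0, h*)`. -/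
noncomputable def TDpref (Hc : Finset (X → Bool)) (h0 : X → Bool) (σ : Pref X) : ℕ∞ :=
  ⨆ hstar ∈ Hc, Dval σ Hc h0 hstar

/-- Teaching dimension of a family of preference functions: `Σ-TD = min_{σ ∈ Σ} TD(σ)`. -/
noncomputable def famTD (Hc : Finset (X → Bool)) (h0 : X → Bool) (F : Set (Pref X)) : ℕ∞ :=
  ⨅ σ ∈ F, TDpref Hc h0 σ

/-- A preference function is collusion-free. -/
def CollusionFree (Hc : Finset (X → Bool)) (σ : Pref X) : Prop :=
  ∀ h ∈ Hc, ∀ H' ⊆ Hc, ∀ hhat : X → Bool,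
    argminSet σ H' h = {hhat} →
    ∀ S : Finset (X × Bool), ConsistentWith hhat S →
      argminSet σ (verSpace H' S) hhat = {hhat}

/-- `Σ_const`: collusion-free constant preference functions. -/
def SigmaConst (Hc : Finset (X → Bool)) : Set (Pref X) :=
  {σ | CollusionFree Hc σ ∧ ∃ c : ℝ, ∀ h' H' h, σ h' H' h = c}

/-- `Σ_global`: collusion-free preference functions of the form `g(h')`. -/
def SigmaGlobal (Hc : Finset (X → Bool)) : Set (Pref X) :=
  {σ | CollusionFree Hc σ ∧ ∃ g : (X → Bool) → ℝ, ∀ h' H' h, σ h' H' h = g h'}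

/-- `Σ_gvs`: collusion-free preference functions of the form `g(h', H')`. -/
def SigmaGVS (Hc : Finset (X → Bool)) : Set (Pref X) :=
  {σ | CollusionFree Hc σ ∧
    ∃ g : (X → Bool) → Finset (X → Bool) → ℝ, ∀ h' H' h, σ h' H' h = g h' H'}

/-- `Σ_local`: collusion-free preference functions of the form `g(h', h)`. -/
def SigmaLocal (Hc : Finset (X → Bool)) : Set (Pref X) :=
  {σ | CollusionFree Hc σ ∧ ∃ g : (X → Bool) → (X → Bool) → ℝ, ∀ h' H' h, σ h' H' h = g h' h}

/-- `Σ_lvs`: all collusion-free preference functions. -/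
def SigmaLVS (Hc : Finset (X → Bool)) : Set (Pref X) := {σ | CollusionFree Hc σ}

/-- `T` is a teaching set for `h` w.r.t. the subclass `Hc`. -/
def IsTeachingSet (Hc : Finset (X → Bool)) (h : X → Bool) (T : Finset X) : Prop :=
  ∀ h' ∈ Hc, (∀ x ∈ T, h' x = h x) → h' = h

/-- Size of the minimum teaching set of `h` w.r.t. `Hc`. -/
noncomputable def minTSsize (Hc : Finset (X → Bool)) (h : X → Bool) : ℕ :=
  sInf {k | ∃ T : Finset X, T.card = k ∧ IsTeachingSet Hc h T}

/-- The classical (worst-case) teaching dimension `TD(H)`. -/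
noncomputable def TDclassic (Hc : Finset (X → Bool)) : ℕ :=
  Hc.sup (minTSsize Hc)

/-- Witness for `RTD(H) ≤ k`: an ordering of `H` where each hypothesis has a teaching
set of size at most `k` w.r.t. the remaining hypotheses. -/
def RTDwitness (Hc : Finset (X → Bool)) (k : ℕ) : Prop :=
  ∃ L : List (X → Bool), L.Nodup ∧ L.toFinset = Hc ∧
    ∀ (i : ℕ) (hi : i < L.length), ∃ T : Finset X, T.card ≤ k ∧
      IsTeachingSet (L.drop i).toFinset (L.get ⟨i, hi⟩) T

/-- The recursive teaching dimension `RTD(H)`. -/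
noncomputable def RTD (Hc : Finset (X → Bool)) : ℕ := sInf {k | RTDwitness Hc k}

/-- A teacher mapping is non-clashing on `Hc`. -/
def NonClashing (Hc : Finset (X → Bool)) (T : (X → Bool) → Finset X) : Prop :=
  ∀ h ∈ Hc, ∀ h' ∈ Hc, h ≠ h' →
    ¬ ((∀ x ∈ T h, h' x = h x) ∧ (∀ x ∈ T h', h x = h' x))

/-- The non-clashing teaching dimension `NCTD(H)`. -/
noncomputable def NCTD (Hc : Finset (X → Bool)) : ℕ :=
  sInf {k | ∃ T : (X → Bool) → Finset X, NonClashing Hc T ∧ ∀ h ∈ Hc, (T h).card ≤ k}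

/-- `Hc` shatters the set of instances `X'`. -/
def Shatters (Hc : Finset (X → Bool)) (X' : Finset X) : Prop :=
  ∀ b : X → Bool, ∃ h ∈ Hc, ∀ x ∈ X', h x = b x

/-- The VC dimension `VCD(H, X)`. -/
noncomputable def VCD (Hc : Finset (X → Bool)) : ℕ :=
  sSup {k | ∃ X' : Finset X, X'.card = k ∧ Shatters Hc X'}

/-!
Take `X = Fin 3` and `H = {001, 000, 010, 011, 100}`. Each of `100`, `010`, `001` differs from
`000` in one point only, so `000` needs all three points: `TD = 3`. In the square `{0ab}` every
hypothesis is matched on any single point by a neighbour, so `RTD ≥ 2`, while the order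
`001, 000, 010, 011, 100` needs two examples per stage. One well-chosen point per hypothesis is a
non-clashing teacher, so `NCTD = 1`.

The preference-based dimensions are compared with these through the reductions. A global
preference `g` teaches `h*` exactly by a teaching set against `{h | g h ≤ g h*}` (for a constant
`g`, against all of `H`), and a recursive teaching order read backwards is such a `g`; for the
lower bound, the member of the square that `g` ranks last needs two examples. A non-clashing
teacher `T` becomes the version-space preference giving `h'` the value `0` when the current
version space agrees with `h'` on `T h'`.
-/

open Finset

section VersionSpaces

theorem mem_verSpace {H' : Finset (X → Bool)} {S : Finset (X × Bool)} {h : X → Bool} :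
    h ∈ verSpace H' S ↔ h ∈ H' ∧ ∀ z ∈ S, h z.1 = z.2 := mem_filter

theorem verSpace_singleton (H' : Finset (X → Bool)) (x : X) (b : Bool) :
    verSpace H' {(x, b)} = H'.filter fun h => h x = b := by
  simp [verSpace]

theorem mem_argminSet {σ : Pref X} {H' : Finset (X → Bool)} {h h' : X → Bool} :
    h' ∈ argminSet σ H' h ↔ h' ∈ H' ∧ ∀ h'' ∈ H', σ h' H' h ≤ σ h'' H' h := mem_filter

theorem argminSet_eq_singleton {σ : Pref X} {V : Finset (X → Bool)} {h hstar : X → Bool}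
    (hmem : hstar ∈ V) (hlt : ∀ h' ∈ V, h' ≠ hstar → σ hstar V h < σ h' V h) :
    argminSet σ V h = {hstar} := by
  ext h'
  rw [mem_argminSet, mem_singleton]
  constructor
  · rintro ⟨hV, hmin⟩
    by_contra hne
    exact (hmin hstar hmem).not_gt (hlt h' hV hne)
  · rintro rfl
    refine ⟨hmem, fun h'' hh'' => ?_⟩
    rcases eq_or_ne h'' h' with rfl | hne
    · exact le_rfl
    · exact (hlt h'' hh'' hne).le

end VersionSpaces

section TeachingSets

variable {H H₁ H₂ : Finset (X → Bool)} {h : X → Bool} {T T' : Finset X}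

theorem IsTeachingSet.anti (hT : IsTeachingSet H₂ h T) (hH : H₁ ⊆ H₂) :
    IsTeachingSet H₁ h T :=
  fun h' hh' hagree => hT h' (hH hh') hagree

theorem IsTeachingSet.mono (hT : IsTeachingSet H h T) (hTT' : T ⊆ T') :
    IsTeachingSet H h T' :=
  fun h' hh' hagree => hT h' hh' fun x hx => hagree x (hTT' hx)

theorem isTeachingSet_univ [Fintype X] : IsTeachingSet H h univ :=
  fun _ _ hagree => funext fun x => hagree x (mem_univ x)

theorem exists_superset_nonempty_card_le [Nonempty X] {k : ℕ} (hk : 1 ≤ k) (hT : T.card ≤ k) :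
    ∃ T', T ⊆ T' ∧ T'.Nonempty ∧ T'.card ≤ k := by
  rcases T.eq_empty_or_nonempty with rfl | hne
  · exact ⟨{Classical.arbitrary X}, empty_subset _, singleton_nonempty _, by simpa using hk⟩
  · exact ⟨T, Subset.rfl, hne, hT⟩

theorem minTSsize_le (hT : IsTeachingSet H h T) : minTSsize H h ≤ T.card :=
  Nat.sInf_le ⟨T, rfl, hT⟩

theorem le_minTSsize [Fintype X] {k : ℕ} (hk : ∀ T, IsTeachingSet H h T → k ≤ T.card) :
    k ≤ minTSsize H h :=
  le_csInf ⟨_, univ, rfl, isTeachingSet_univ⟩ fun _ ⟨T, hcard, hT⟩ => hcard ▸ hk T hT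

theorem TDclassic_le_card [Fintype X] : TDclassic H ≤ Fintype.card X :=
  Finset.sup_le fun _ _ => minTSsize_le isTeachingSet_univ

end TeachingSets

section TeachingCost

variable {σ : Pref X} {Hc H' : Finset (X → Bool)} {h h0 hstar : X → Bool}

theorem Dle.mono : ∀ {m n : ℕ} {H' : Finset (X → Bool)} {h : X → Bool},
    Dle σ m H' h hstar → m ≤ n → Dle σ n H' h hstar
  | 0, _, _, _, hd, _ => hd.elim
  | _ + 1, 0, _, _, _, hmn => absurd hmn (Nat.not_succ_le_zero _)
  | _ + 1, _ + 1, _, _, hd, hmn => by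
    rcases hd with ⟨z, hz, hC⟩ | ⟨z, hz, hrec⟩
    · exact Or.inl ⟨z, hz, hC⟩
    · exact Or.inr ⟨z, hz, fun h'' hh'' => (hrec h'' hh'').mono (Nat.le_of_succ_le_succ hmn)⟩

theorem Dle_length_of_forall_argminSet_eq :
    ∀ (l : List X) {H' : Finset (X → Bool)} {h : X → Bool}, l ≠ [] →
      (∀ h, argminSet σ (H'.filter fun h' => ∀ x ∈ l, h' x = hstar x) h = {hstar}) →
      Dle σ l.length H' h hstar
  | [], _, _, hl, _ => (hl rfl).elim
  | [x], H', h, _, hargmin =>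
    Or.inl ⟨(x, hstar x), rfl, by simpa [Cand, verSpace_singleton] using hargmin h⟩
  | x :: y :: l, H', h, _, hargmin =>
    Or.inr ⟨(x, hstar x), rfl, fun _ _ =>
      Dle_length_of_forall_argminSet_eq (y :: l) (List.cons_ne_nil _ _) fun h => by
        simpa [verSpace_singleton, filter_filter] using hargmin h⟩

theorem Dle_card_of_forall_argminSet_eq {T : Finset X} (hT : T.Nonempty)
    (hargmin : ∀ h, argminSet σ (H'.filter fun h' => ∀ x ∈ T, h' x = hstar x) h = {hstar}) :
    Dle σ T.card H' h hstar := by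
  rw [← length_toList]
  exact Dle_length_of_forall_argminSet_eq _ (by simpa using hT.ne_empty)
    fun h => by simpa using hargmin h

theorem le_TDpref_of_not_Dle {m : ℕ} (hmem : hstar ∈ Hc) (hd : ¬ Dle σ m Hc h0 hstar) :
    ((m + 1 : ℕ) : ℕ∞) ≤ TDpref Hc h0 σ := by
  refine le_trans (le_sInf ?_) (le_iSup₂ (f := fun h' _ => Dval σ Hc h0 h') hstar hmem)
  rintro _ ⟨n, rfl, hn⟩
  exact_mod_cast Nat.lt_of_not_le fun hnm => hd (hn.mono hnm)

theorem famTD_le_of_forall_Dle {F : Set (Pref X)} {k : ℕ} (hσ : σ ∈ F)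
    (hd : ∀ hstar ∈ Hc, Dle σ k Hc h0 hstar) : famTD Hc h0 F ≤ k :=
  (iInf₂_le σ hσ).trans <| iSup₂_le fun hstar hmem => sInf_le ⟨k, rfl, hd hstar hmem⟩

theorem le_famTD_of_forall_exists_not_Dle {F : Set (Pref X)} {k : ℕ}
    (hd : ∀ σ ∈ F, ∃ hstar ∈ Hc, ¬ Dle σ k Hc h0 hstar) : ((k + 1 : ℕ) : ℕ∞) ≤ famTD Hc h0 F :=
  le_iInf₂ fun σ hσ => by
    obtain ⟨hstar, hmem, hnd⟩ := hd σ hσ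
    exact le_TDpref_of_not_Dle hmem hnd

theorem one_le_famTD {F : Set (Pref X)} (hmem : hstar ∈ Hc) : 1 ≤ famTD Hc h0 F :=
  le_famTD_of_forall_exists_not_Dle (k := 0) fun _ _ => ⟨hstar, hmem, id⟩

end TeachingCost

section GlobalPreferences

variable {g : (X → Bool) → ℝ} {H' : Finset (X → Bool)} {h hstar : X → Bool}

theorem collusionFree_global (Hc : Finset (X → Bool)) (g : (X → Bool) → ℝ) :
    CollusionFree Hc (fun h' _ _ => g h') := by
  intro h _ H' _ hhat hargmin S hcons
  have hhat_min := mem_argminSet.1 (hargmin ▸ mem_singleton_self hhat)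
  refine argminSet_eq_singleton (mem_verSpace.2 ⟨hhat_min.1, hcons⟩) fun h' hh' hne => ?_
  by_contra hle
  have : h' ∈ argminSet (fun h' _ _ => g h') H' h :=
    mem_argminSet.2 ⟨(mem_verSpace.1 hh').1, fun h'' hh'' =>
      (not_lt.1 hle).trans (hhat_min.2 h'' hh'')⟩
  exact hne (mem_singleton.1 (hargmin ▸ this))

theorem Dle_global_of_isTeachingSet {T : Finset X} (hmem : hstar ∈ H') (hne : T.Nonempty)
    (hT : IsTeachingSet (H'.filter fun h => g h ≤ g hstar) hstar T) :
    Dle (fun h' _ _ => g h') T.card H' h hstar :=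
  Dle_card_of_forall_argminSet_eq hne fun _ =>
    argminSet_eq_singleton (mem_filter.2 ⟨hmem, fun _ _ => rfl⟩) fun h' hh' hne' =>
      lt_of_not_ge fun hle => hne' <|
        hT h' (mem_filter.2 ⟨(mem_filter.1 hh').1, hle⟩) (mem_filter.1 hh').2

theorem exists_isTeachingSet_of_Dle_global : ∀ {n : ℕ} {H' : Finset (X → Bool)} {h : X → Bool},
    hstar ∈ H' → Dle (fun h' _ _ => g h') n H' h hstar →
      ∃ T : Finset X, T.card ≤ n ∧ IsTeachingSet (H'.filter fun h => g h ≤ g hstar) hstar T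
  | 0, _, _, _, hd => hd.elim
  | n + 1, H', h, hmem, hd => by
    have hmem_z : ∀ z : X × Bool, hstar z.1 = z.2 → hstar ∈ verSpace H' {z} := fun z hz =>
      mem_verSpace.2 ⟨hmem, by simpa using hz⟩
    rcases hd with ⟨z, hz, hC⟩ | ⟨z, hz, hrec⟩
    · refine ⟨{z.1}, by simp, fun h' hh' hagree => ?_⟩
      have hstar_min := (mem_argminSet.1 (hC ▸ mem_singleton_self hstar)).2
      have hh'z : h' ∈ verSpace H' {z} :=
        mem_verSpace.2 ⟨(mem_filter.1 hh').1, by simpa [← hz] using hagree⟩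
      refine mem_singleton.1 (hC ▸ mem_argminSet.2 ⟨hh'z, fun h'' hh'' => ?_⟩)
      exact (mem_filter.1 hh').2.trans (hstar_min h'' hh'')
    · obtain ⟨h'', hh''⟩ : (Cand (fun h' _ _ => g h') H' h z).Nonempty := by
        obtain ⟨m, hm, hmin⟩ := (verSpace H' {z}).exists_min_image g ⟨hstar, hmem_z z hz⟩
        exact ⟨m, mem_argminSet.2 ⟨hm, hmin⟩⟩
      obtain ⟨T, hcard, hT⟩ := exists_isTeachingSet_of_Dle_global (hmem_z z hz) (hrec h'' hh'')
      refine ⟨insert z.1 T, (card_insert_le _ _).trans (by omega), fun h' hh' hagree => ?_⟩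
      have hh'z : h' ∈ verSpace H' {z} :=
        mem_verSpace.2 ⟨(mem_filter.1 hh').1,
          by simpa [← hz] using hagree z.1 (mem_insert_self _ _)⟩
      exact hT h' (mem_filter.2 ⟨hh'z, (mem_filter.1 hh').2⟩)
        fun x hx => hagree x (mem_insert_of_mem hx)

end GlobalPreferences

section Reductions

variable {Hc : Finset (X → Bool)} {h0 : X → Bool} {k : ℕ}

theorem famTD_sigmaConst_le_card [Fintype X] [Nonempty X] :
    famTD Hc h0 (SigmaConst Hc) ≤ Fintype.card X := by
  refine famTD_le_of_forall_Dle ⟨collusionFree_global Hc fun _ => 0, 0, fun _ _ _ => rfl⟩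
    fun hstar hmem => ?_
  simpa using Dle_global_of_isTeachingSet (g := fun _ => 0) (h := h0) hmem univ_nonempty
    isTeachingSet_univ

theorem TDclassic_le_famTD_sigmaConst : (TDclassic Hc : ℕ∞) ≤ famTD Hc h0 (SigmaConst Hc) := by
  refine le_iInf₂ fun σ ⟨_, c, hc⟩ => ?_
  obtain rfl : σ = fun _ _ _ => c := funext₃ hc
  have hTS_le_Dval : ∀ hstar ∈ Hc,
      (minTSsize Hc hstar : ℕ∞) ≤ Dval (fun _ _ _ => c) Hc h0 hstar :=
    fun hstar hmem => le_sInf fun _ ⟨m, hm, hd⟩ => by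
      obtain ⟨T, hcard, hT⟩ := exists_isTeachingSet_of_Dle_global (g := fun _ => c) hmem hd
      rw [hm]
      exact_mod_cast (minTSsize_le (by simpa using hT)).trans hcard
  refine Finset.sup_induction (p := fun n : ℕ => (n : ℕ∞) ≤ TDpref Hc h0 _) (by simp)
    (fun a ha b hb => by rw [Nat.mono_cast.map_max]; exact max_le ha hb) fun hstar hmem => ?_
  exact (hTS_le_Dval hstar hmem).trans (le_iSup₂ (f := fun h' _ => Dval _ Hc h0 h') hstar hmem)

/-- The preference `g h = -(index of h in L)` of a recursive teaching order `L`: everything the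
learner does not strictly prefer to `L[i]` lies in `L.drop i`. -/
theorem famTD_sigmaGlobal_le_of_rtdWitness [Nonempty X] (hk : 1 ≤ k) (hw : RTDwitness Hc k) :
    famTD Hc h0 (SigmaGlobal Hc) ≤ k := by
  obtain ⟨L, -, rfl, hts⟩ := hw
  let g : (X → Bool) → ℝ := fun h => -(L.idxOf h : ℝ)
  refine famTD_le_of_forall_Dle (σ := fun h' _ _ => g h')
    ⟨collusionFree_global _ g, g, fun _ _ _ => rfl⟩ fun hstar hmem => ?_
  have hi : L.idxOf hstar < L.length := List.idxOf_lt_length_iff.2 (List.mem_toFinset.1 hmem)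
  obtain ⟨T, hcard, hT⟩ := hts _ hi
  rw [List.get_eq_getElem, List.getElem_idxOf] at hT
  obtain ⟨T', hTT', hne, hcard'⟩ := exists_superset_nonempty_card_le hk hcard
  have hsub : (L.toFinset.filter fun h => g h ≤ g hstar) ⊆ (L.drop (L.idxOf hstar)).toFinset := by
    intro h hh
    obtain ⟨hL, hle⟩ := mem_filter.1 hh
    have hj := List.idxOf_lt_length_iff.2 (List.mem_toFinset.1 hL)
    have hij : L.idxOf hstar ≤ L.idxOf h := by exact_mod_cast neg_le_neg_iff.1 hle
    refine List.mem_toFinset.2 (List.mem_drop_iff_getElem.2 ⟨L.idxOf h - L.idxOf hstar, ?_, ?_⟩)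
    · omega
    · simp only [Nat.add_sub_cancel' hij, List.getElem_idxOf]
  exact (Dle_global_of_isTeachingSet hmem hne ((hT.anti hsub).mono hTT')).mono hcard'

end Reductions


def TeachingSetsExceed (B : Finset (X → Bool)) (k : ℕ) : Prop :=
  ∀ h ∈ B, ∀ T : Finset X, IsTeachingSet B h T → k < T.card

section Lower

variable {Hc B : Finset (X → Bool)} {h0 : X → Bool} {k : ℕ}

/-- The hypothesis of `B` that a global preference ranks last can only be taught by a teaching
set against all of `B`. -/
theorem le_famTD_sigmaGlobal (hB : B ⊆ Hc) (hne : B.Nonempty) (hcore : TeachingSetsExceed B k) :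
    ((k + 1 : ℕ) : ℕ∞) ≤ famTD Hc h0 (SigmaGlobal Hc) := by
  refine le_famTD_of_forall_exists_not_Dle fun σ ⟨_, g, hg⟩ => ?_
  obtain rfl : σ = fun h' _ _ => g h' := funext₃ hg
  obtain ⟨hstar, hmem, hmax⟩ := B.exists_max_image g hne
  refine ⟨hstar, hB hmem, fun hd => ?_⟩
  obtain ⟨T, hcard, hT⟩ := exists_isTeachingSet_of_Dle_global (hB hmem) hd
  exact (hcore hstar hmem T (hT.anti fun h hh => mem_filter.2 ⟨hB hh, hmax h hh⟩)).not_ge hcard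

theorem RTDwitness.mono {k' : ℕ} (hw : RTDwitness Hc k) (hkk' : k ≤ k') : RTDwitness Hc k' := by
  obtain ⟨L, hnd, hL, hts⟩ := hw
  exact ⟨L, hnd, hL, fun i hi => (hts i hi).imp fun _ hT => ⟨hT.1.trans hkk', hT.2⟩⟩

theorem rtdWitness_card [Fintype X] (Hc : Finset (X → Bool)) :
    RTDwitness Hc (Fintype.card X) :=
  ⟨Hc.toList, nodup_toList Hc, by ext; simp, fun _ _ => ⟨univ, le_rfl, isTeachingSet_univ⟩⟩

/-- In a recursive teaching order, the first hypothesis of `B` is taught against all of `B`. -/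
theorem not_rtdWitness (hB : B ⊆ Hc) (hne : B.Nonempty) (hcore : TeachingSetsExceed B k) :
    ¬ RTDwitness Hc k := by
  rintro ⟨L, -, rfl, hts⟩
  induction L with
  | nil => simpa using hB hne.choose_spec
  | cons a L ih =>
    by_cases ha : a ∈ B
    · obtain ⟨T, hcard, hT⟩ := hts 0 (Nat.succ_pos _)
      exact (hcore a ha T (hT.anti fun h hh => by simpa using hB hh)).not_ge hcard
    · refine ih (fun i hi => hts (i + 1) (Nat.succ_lt_succ hi)) fun h hh => ?_
      simpa [ne_of_mem_of_not_mem hh ha] using hB hh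

theorem le_RTD [Fintype X] (hB : B ⊆ Hc) (hne : B.Nonempty) (hcore : TeachingSetsExceed B k) :
    k + 1 ≤ RTD Hc :=
  le_csInf ⟨_, rtdWitness_card Hc⟩ fun _ hw =>
    Nat.lt_of_not_le fun hle => not_rtdWitness hB hne hcore (hw.mono hle)

end Lower

noncomputable def gvsPref (T : (X → Bool) → Finset X) : Pref X :=
  fun h' H' _ => if ∀ h ∈ H', ∀ x ∈ T h', h x = h' x then 0 else 1

section NonClashing

variable {Hc V : Finset (X → Bool)} {T T' : (X → Bool) → Finset X} {h0 hstar : X → Bool}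

theorem NonClashing.mono (hnc : NonClashing Hc T) (hTT' : ∀ h ∈ Hc, T h ⊆ T' h) :
    NonClashing Hc T' :=
  fun h hh h' hh' hne ⟨hagree, hagree'⟩ => hnc h hh h' hh' hne
    ⟨fun x hx => hagree x (hTT' h hh hx), fun x hx => hagree' x (hTT' h' hh' hx)⟩

theorem nonClashing_univ [Fintype X] : NonClashing Hc fun _ => univ :=
  fun _ _ _ _ hne ⟨hagree, _⟩ => hne (funext fun x => (hagree x (mem_univ x)).symm)

theorem NCTD_pos [Fintype X] {h₁ h₂ : X → Bool} (hh₁ : h₁ ∈ Hc) (hh₂ : h₂ ∈ Hc) (hne : h₁ ≠ h₂) :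
    0 < NCTD Hc := by
  refine Nat.pos_of_ne_zero fun hzero => (Nat.sInf_eq_zero.1 hzero).elim ?_ fun hempty => ?_
  · rintro ⟨T, hnc, hcard⟩
    have hempty : ∀ h ∈ Hc, T h = ∅ := fun h hh => card_eq_zero.1 (Nat.le_zero.1 (hcard h hh))
    exact hnc h₁ hh₁ h₂ hh₂ hne ⟨by simp [hempty h₁ hh₁], by simp [hempty h₂ hh₂]⟩
  · exact Set.eq_empty_iff_forall_notMem.1 hempty _ ⟨_, nonClashing_univ, fun _ _ => le_rfl⟩

/-- Non-clashing leaves `hstar` as the only hypothesis of preference `0`. -/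
theorem argminSet_gvsPref_eq_singleton (hnc : NonClashing Hc T) (hV : V ⊆ Hc) (hmem : hstar ∈ V)
    (hagree : ∀ h ∈ V, ∀ x ∈ T hstar, h x = hstar x) (h : X → Bool) :
    argminSet (gvsPref T) V h = {hstar} := by
  refine argminSet_eq_singleton hmem fun h' hh' hne => ?_
  simp only [gvsPref, if_pos hagree]
  split_ifs with hagree'
  · exact (hnc hstar (hV hmem) h' (hV hh') hne.symm
      ⟨fun x hx => hagree h' hh' x hx, fun x hx => hagree' hstar hmem x hx⟩).elim
  · exact one_pos

theorem collusionFree_gvsPref (hnc : NonClashing Hc T) : CollusionFree Hc (gvsPref T) := by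
  intro h _ H' hH' hhat hargmin S hcons
  have hhat_min := mem_argminSet.1 (hargmin ▸ mem_singleton_self hhat)
  refine argminSet_gvsPref_eq_singleton hnc ((filter_subset _ _).trans hH')
    (mem_verSpace.2 ⟨hhat_min.1, hcons⟩) (fun h' hh' => ?_) hhat
  by_cases hagree : ∀ h ∈ H', ∀ x ∈ T hhat, h x = hhat x
  · exact hagree h' (mem_verSpace.1 hh').1
  -- otherwise `hhat` has preference `1`, so every hypothesis of `H'` is a minimiser
  have hall_min : h' ∈ argminSet (gvsPref T) H' h := by
    refine mem_argminSet.2 ⟨(mem_verSpace.1 hh').1, fun h'' hh'' => ?_⟩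
    refine le_trans ?_ (hhat_min.2 h'' hh'')
    simp only [gvsPref, if_neg hagree]
    split_ifs <;> norm_num
  rw [hargmin, mem_singleton] at hall_min
  simp [hall_min]

theorem famTD_sigmaGVS_le [Nonempty X] {k : ℕ} (hk : 1 ≤ k) (hnc : NonClashing Hc T)
    (hcard : ∀ h ∈ Hc, (T h).card ≤ k) : famTD Hc h0 (SigmaGVS Hc) ≤ k := by
  choose! T' hTT' hne hcard' using fun h hh => exists_superset_nonempty_card_le hk (hcard h hh)
  have hnc' := hnc.mono hTT'
  refine famTD_le_of_forall_Dle (σ := gvsPref T')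
    ⟨collusionFree_gvsPref hnc', fun h' H' => gvsPref T' h' H' h', fun _ _ _ => rfl⟩
    fun hstar hmem => ?_
  refine (Dle_card_of_forall_argminSet_eq (hne hstar hmem) fun h => ?_).mono (hcard' hstar hmem)
  exact argminSet_gvsPref_eq_singleton hnc' (filter_subset _ _)
    (mem_filter.2 ⟨hmem, fun _ _ => rfl⟩) (fun h hh => (mem_filter.1 hh).2) h

end NonClashing

/-- Listed in a recursive teaching order with teaching sets of size `2`. -/
def exampleOrder : List (Fin 3 → Bool) :=
  [![false, false, true], ![false, false, false], ![false, true, false], ![false, true, true],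
    ![true, false, false]]

noncomputable def exampleClass : Finset (Fin 3 → Bool) := exampleOrder.toFinset

noncomputable def exampleCore : Finset (Fin 3 → Bool) := exampleClass.filter fun h => h 0 = false

def exampleTeacher (h : Fin 3 → Bool) : Finset (Fin 3) :=
  {if h 0 then 0 else if h 1 = h 2 then 1 else 2}

theorem zero_mem_exampleClass : ![false, false, false] ∈ exampleClass := by decide

theorem three_le_card_of_isTeachingSet_zero (T : Finset (Fin 3))
    (hT : IsTeachingSet exampleClass ![false, false, false] T) : 3 ≤ T.card := by
  revert T
  unfold IsTeachingSet
  decide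

theorem exampleClass_rtdWitness : RTDwitness exampleClass 2 := by
  refine ⟨exampleOrder, by decide, by ext; simp [exampleClass], ?_⟩
  simp only [IsTeachingSet, List.mem_toFinset]
  decide

theorem exampleCore_teachingSetsExceed : TeachingSetsExceed exampleCore 1 := by
  unfold TeachingSetsExceed IsTeachingSet
  decide

theorem exampleClass_nonClashing : NonClashing exampleClass exampleTeacher := by
  unfold NonClashing
  decide

/-- there is a class with `Σ_const-TD = 3`, `Σ_global-TD = 2`,
`Σ_gvs-TD = 1` (equivalently `TD = 3`, `RTD = 2`, `NCTD = 1`). -/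
theorem exists_class_3_2_1 :
    ∃ (X : Type) (_ : Fintype X) (Hc : Finset (X → Bool)) (h0 : X → Bool),
      h0 ∈ Hc ∧
      famTD Hc h0 (SigmaConst Hc) = 3 ∧
      famTD Hc h0 (SigmaGlobal Hc) = 2 ∧
      famTD Hc h0 (SigmaGVS Hc) = 1 ∧
      TDclassic Hc = 3 ∧ RTD Hc = 2 ∧ NCTD Hc = 1 := by
  have hTD : TDclassic exampleClass = 3 :=
    le_antisymm TDclassic_le_card <|
      (le_minTSsize three_le_card_of_isTeachingSet_zero).trans (le_sup zero_mem_exampleClass)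
  have hcore_ne : exampleCore.Nonempty := ⟨![false, false, false], by decide⟩
  have hteacher_card : ∀ h ∈ exampleClass, (exampleTeacher h).card ≤ 1 :=
    fun _ _ => (card_singleton _).le
  refine ⟨Fin 3, inferInstance, exampleClass, ![false, false, false], zero_mem_exampleClass,
    ?_, ?_, ?_, hTD, ?_, ?_⟩
  · refine le_antisymm (famTD_sigmaConst_le_card.trans_eq (by simp)) ?_
    exact_mod_cast hTD ▸ TDclassic_le_famTD_sigmaConst
  · exact le_antisymm (famTD_sigmaGlobal_le_of_rtdWitness one_le_two exampleClass_rtdWitness)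
      (le_famTD_sigmaGlobal (filter_subset _ _) hcore_ne exampleCore_teachingSetsExceed)
  · exact le_antisymm (famTD_sigmaGVS_le le_rfl exampleClass_nonClashing hteacher_card)
      (one_le_famTD zero_mem_exampleClass)
  · exact le_antisymm (Nat.sInf_le exampleClass_rtdWitness)
      (le_RTD (filter_subset _ _) hcore_ne exampleCore_teachingSetsExceed)
  · exact le_antisymm (Nat.sInf_le ⟨_, exampleClass_nonClashing, hteacher_card⟩)
      (NCTD_pos zero_mem_exampleClass (by decide : ![true, false, false] ∈ exampleClass)
        (by decide))
end

section
/- There exists a constant c > 0 such that for every d ≥ 2, for the power-set hypothesis class H_d consisting of all 2^d functions from a d-element instance set X_d to Bool, every collusion-free preference function σ and every initial hypothesis h0 ∈ H_d satisfy TD_{X_d,H_d,h0}(σ) ≥ c · d / log d; consequently Σ_lvs-TD for the power-set class of size d is Ω(d / log d). -/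
open scoped Classical

variable {X : Type}

/-
A learner under any preference function can be simulated deterministically: always move to
one fixed most-preferred candidate. If every target is taught within `t` rounds, then every
target is the final hypothesis of this simulation on some sequence of at most `t` labeled
examples. There are at most `(2d + 1) ^ t` such sequences, so `2 ^ d ≤ (2d + 1) ^ t`, which
forces `t ≥ (log 2 / 3) · d / log d`.
-/

lemma argminSet_nonempty (σ : Pref X) {H' : Finset (X → Bool)} (hH' : H'.Nonempty)
    (h : X → Bool) : (argminSet σ H' h).Nonempty := by
  obtain ⟨a, ha, hmin⟩ := Finset.exists_min_image H' (fun h' => σ h' H' h) hH'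
  exact ⟨a, Finset.mem_filter.2 ⟨ha, hmin⟩⟩

lemma mem_verSpace_singleton {H' : Finset (X → Bool)} {z : X × Bool} {g : X → Bool} :
    g ∈ verSpace H' {z} ↔ g ∈ H' ∧ g z.1 = z.2 := by
  simp [verSpace]

noncomputable def learnerHyp (σ : Pref X) :
    List (X × Bool) → Finset (X → Bool) → (X → Bool) → X → Bool
  | [], _, h => h
  | z :: L, H', h =>
    learnerHyp σ L (verSpace H' {z}) (Classical.epsilon (· ∈ Cand σ H' h z))

lemma exists_learnerHyp_eq_of_Dle (σ : Pref X) :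
    ∀ (n : ℕ) {H' : Finset (X → Bool)} {h hstar : X → Bool}, hstar ∈ H' →
      Dle σ n H' h hstar →
        ∃ L : List (X × Bool), L.length ≤ n ∧ learnerHyp σ L H' h = hstar
  | 0, _, _, _, _, hD => hD.elim
  | n + 1, H', h, hstar, hmem, hD => by
    rcases hD with ⟨z, -, hC⟩ | ⟨z, hz, hall⟩
    · refine ⟨[z], by simp, ?_⟩
      have hpick := Classical.epsilon_spec (p := (· ∈ Cand σ H' h z)) ⟨hstar, by simp [hC]⟩
      simpa [learnerHyp, hC] using hpick
    · have hmem' : hstar ∈ verSpace H' {z} := mem_verSpace_singleton.2 ⟨hmem, hz⟩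
      have hpick := Classical.epsilon_spec (p := (· ∈ Cand σ H' h z))
        (argminSet_nonempty σ ⟨hstar, hmem'⟩ h)
      obtain ⟨L, hL, hdec⟩ := exists_learnerHyp_eq_of_Dle σ n hmem' (hall _ hpick)
      exact ⟨z :: L, by simpa using hL, hdec⟩

lemma card_le_of_forall_exists_length_le {α β : Type*} [Fintype α] (f : List α → β)
    {s : Finset β} {t : ℕ} (hs : ∀ b ∈ s, ∃ L : List α, L.length ≤ t ∧ f L = b) :
    s.card ≤ (Fintype.card α + 1) ^ t := by
  choose L hL hf using hs
  let code : s → Fin t → Option α := fun b i => (L b b.2)[(i : ℕ)]?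
  have hcode : Function.Injective code := by
    rintro ⟨b₁, hb₁⟩ ⟨b₂, hb₂⟩ heq
    have hlists : L b₁ hb₁ = L b₂ hb₂ := by
      refine List.ext_getElem? fun i => ?_
      by_cases hi : i < t
      · exact congrFun heq ⟨i, hi⟩
      · rw [List.getElem?_eq_none ((hL b₁ hb₁).trans (not_lt.1 hi)),
          List.getElem?_eq_none ((hL b₂ hb₂).trans (not_lt.1 hi))]
    exact Subtype.ext ((hf b₁ hb₁).symm.trans (hlists ▸ hf b₂ hb₂))
  calc s.card = Fintype.card s := (Fintype.card_coe s).symm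
    _ ≤ Fintype.card (Fin t → Option α) := Fintype.card_le_of_injective code hcode
    _ = (Fintype.card α + 1) ^ t := by simp

lemma exists_Dle_of_Dval_le {σ : Pref X} {H' : Finset (X → Bool)} {h hstar : X → Bool}
    {t : ℕ} (hD : Dval σ H' h hstar ≤ t) : ∃ m ≤ t, Dle σ m H' h hstar := by
  obtain ⟨_, ⟨m, rfl, hm⟩, hlt⟩ :=
    sInf_lt_iff.1 (hD.trans_lt (ENat.natCast_lt_natCast.2 t.lt_succ_self))
  exact ⟨m, Nat.lt_succ_iff.1 (ENat.natCast_lt_natCast.1 hlt), hm⟩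

theorem card_le_of_TDpref_le [Fintype X] {Hc : Finset (X → Bool)} {h0 : X → Bool}
    {σ : Pref X} {t : ℕ} (hT : TDpref Hc h0 σ ≤ t) :
    Hc.card ≤ (2 * Fintype.card X + 1) ^ t := by
  have hcodes : ∀ hstar ∈ Hc, ∃ L : List (X × Bool), L.length ≤ t ∧
      learnerHyp σ L Hc h0 = hstar := by
    intro hstar hmem
    obtain ⟨m, hmt, hm⟩ := exists_Dle_of_Dval_le ((le_iSup₂ hstar hmem).trans hT)
    obtain ⟨L, hL, hdec⟩ := exists_learnerHyp_eq_of_Dle σ m hmem hm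
    exact ⟨L, hL.trans hmt, hdec⟩
  simpa [mul_comm] using card_le_of_forall_exists_length_le _ hcodes

lemma log_two_div_three_mul_div_log_le {d t : ℕ} (hd : 2 ≤ d)
    (h : 2 ^ d ≤ (2 * d + 1) ^ t) : Real.log 2 / 3 * d / Real.log d ≤ t := by
  have hd2 : (2 : ℝ) ≤ d := by exact_mod_cast hd
  have hlogd : 0 < Real.log d := Real.log_pos (by linarith)
  have hlog : d * Real.log 2 ≤ t * Real.log (2 * d + 1) := by
    have := Real.log_le_log (by positivity)
      (show (2 : ℝ) ^ d ≤ (2 * d + 1) ^ t by exact_mod_cast h)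
    rwa [Real.log_pow, Real.log_pow] at this
  have hcube : Real.log (2 * d + 1) ≤ 3 * Real.log d := by
    calc Real.log (2 * d + 1) ≤ Real.log ((d : ℝ) ^ 3) :=
          Real.log_le_log (by positivity)
            (by nlinarith [mul_le_mul hd2 hd2 (by norm_num) (by linarith)])
      _ = 3 * Real.log d := by rw [Real.log_pow]; norm_num
  rw [div_le_iff₀ hlogd]
  nlinarith [mul_le_mul_of_nonneg_left hcube (Nat.cast_nonneg t : (0 : ℝ) ≤ t)]

theorem le_TDpref_univ {d : ℕ} (hd : 2 ≤ d) (σ : Pref (Fin d)) (h0 : Fin d → Bool) :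
    ENNReal.ofReal (Real.log 2 / 3 * d / Real.log d) ≤
      (TDpref (Finset.univ : Finset (Fin d → Bool)) h0 σ : ENNReal) := by
  induction hT : TDpref (Finset.univ : Finset (Fin d → Bool)) h0 σ using ENat.recTopCoe with
  | top => simp
  | coe t =>
    have hcard := card_le_of_TDpref_le hT.le
    simp only [Finset.card_univ, Fintype.card_fun, Fintype.card_bool, Fintype.card_fin] at hcard
    rw [ENat.toENNReal_coe, ← ENNReal.ofReal_natCast]
    exact ENNReal.ofReal_le_ofReal (log_two_div_three_mul_div_log_le hd hcard)

/-- for the power-set class of size `d`, every collusion-free preference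
function has teaching dimension `Ω(d / log d)`; consequently so does `Σ_lvs-TD`. -/
theorem powerset_lower_bound :
    ∃ c : ℝ, 0 < c ∧ ∀ d : ℕ, 2 ≤ d →
      (∀ σ : Pref (Fin d), CollusionFree (Finset.univ : Finset (Fin d → Bool)) σ →
        ∀ h0 ∈ (Finset.univ : Finset (Fin d → Bool)),
          ENNReal.ofReal (c * d / Real.log d) ≤
            (TDpref (Finset.univ : Finset (Fin d → Bool)) h0 σ : ENNReal)) ∧
      (∀ h0 ∈ (Finset.univ : Finset (Fin d → Bool)),
        ENNReal.ofReal (c * d / Real.log d) ≤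
          (famTD (Finset.univ : Finset (Fin d → Bool)) h0
            (SigmaLVS (Finset.univ : Finset (Fin d → Bool))) : ENNReal)) := by
  refine ⟨Real.log 2 / 3, by positivity, fun d hd => ⟨?_, ?_⟩⟩
  · intro σ _ h0 _
    exact le_TDpref_univ hd σ h0
  · intro h0 _
    simp only [famTD, ENat.toENNReal_iInf]
    exact le_iInf₂ fun σ _ => le_TDpref_univ hd σ h0
end
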